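/- arXiv:1910.13562 — 5 statements merged into one kernel-verified Lean document; each statement's English description precedes it below -/
import Mathlib

section
/- Let C be a braided monoidal category, A a symmetric monoidal subcategory of C, and for objects c, c' of C suppose the functor a ↦ Hom_C(a ⊗ c, c') from A^op to vector spaces is representable by an object Hom_underline(c,c') of A. Then composition maps Hom_underline(c',c'') ⊗ Hom_underline(c,c') → Hom_underline(c,c''), defined via the representing property, the evaluation ev : Hom_underline(c',c'') ⊗ c' → c'', and duality in A, make the objects of C into a category enriched over A. -/
open CategoryTheory MonoidalCategory Functor.LaxMonoidal Functor.OplaxMonoidal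

/-!
Naturality of `φ` in `a` means that every `φ f` factors as `(ι.map f ▷ c) ≫ ev` through the
evaluation `ev = φ (𝟙 (H c c'))`. As `φ` is a bijection, an identity between morphisms into
`H c c''` may be checked after applying `φ`; there, each axiom of the enriched category
becomes, after at most one whisker exchange, a coherence identity in `C` combined with the unit
or associativity axiom of the oplax structure `(δ, η)` of `ι`.
-/

namespace RepresentableHom

variable {A C : Type*} [Category A] [Category C] [MonoidalCategory C]
  {ι : A ⥤ C} {H : C → C → A}
  (φ : ∀ (a : A) (c c' : C), (a ⟶ H c c') ≃ (ι.obj a ⊗ c ⟶ c'))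

def IsNatural : Prop :=
  ∀ {a a' : A} (h : a' ⟶ a) {c c' : C} (f : a ⟶ H c c'),
    φ a' c c' (h ≫ f) = (ι.map h ▷ c) ≫ φ a c c' f

def ev (c c' : C) : ι.obj (H c c') ⊗ c ⟶ c' := φ _ c c' (𝟙 _)

variable {φ} in
theorem apply_eq_whiskerRight_ev (hφ : IsNatural φ) {a : A} {c c' : C} (f : a ⟶ H c c') :
    φ a c c' f = (ι.map f ▷ c) ≫ ev φ c c' := by
  simpa [ev] using hφ f (𝟙 _)

variable [MonoidalCategory A] [ι.OplaxMonoidal]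

def comp (c c' c'' : C) : H c' c'' ⊗ H c c' ⟶ H c c'' :=
  (φ _ c c'').symm ((δ ι _ _ ▷ c) ≫ (α_ _ _ c).hom ≫ (_ ◁ ev φ c c') ≫ ev φ c' c'')

protected def id (c : C) : 𝟙_ A ⟶ H c c := (φ _ c c).symm ((η ι ▷ c) ≫ (λ_ c).hom)

theorem apply_comp (c c' c'' : C) :
    φ _ c c'' (comp φ c c' c'') =
      (δ ι _ _ ▷ c) ≫ (α_ _ _ c).hom ≫ (_ ◁ ev φ c c') ≫ ev φ c' c'' :=
  Equiv.apply_symm_apply _ _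

theorem apply_id (c : C) : φ _ c c (RepresentableHom.id φ c) = (η ι ▷ c) ≫ (λ_ c).hom :=
  Equiv.apply_symm_apply _ _

variable {φ}

theorem apply_tensorHom_comp (hφ : IsNatural φ) {a a' : A} {c c' c'' : C}
    (f : a ⟶ H c c') (g : a' ⟶ H c' c'') :
    φ (a' ⊗ a) c c'' ((g ⊗ₘ f) ≫ comp φ c c' c'') =
      (δ ι a' a ▷ c) ≫ (α_ (ι.obj a') (ι.obj a) c).hom ≫
        (ι.obj a' ◁ φ a c c' f) ≫ φ a' c' c'' g := by
  rw [hφ, apply_comp, apply_eq_whiskerRight_ev hφ f, apply_eq_whiskerRight_ev hφ g,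
    ← comp_whiskerRight_assoc, ← δ_natural, comp_whiskerRight_assoc,
    MonoidalCategory.tensorHom_def]
  simp only [comp_whiskerRight, Category.assoc, whiskerLeft_comp,
    associator_naturality_middle_assoc, associator_naturality_left_assoc,
    whisker_exchange_assoc]

theorem apply_whiskerRight_comp (hφ : IsNatural φ) {a' : A} {c c' c'' : C}
    (g : a' ⟶ H c' c'') :
    φ _ c c'' ((g ▷ H c c') ≫ comp φ c c' c'') =
      (δ ι _ _ ▷ c) ≫ (α_ _ _ c).hom ≫ (_ ◁ ev φ c c') ≫ φ a' c' c'' g := by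
  simpa [ev] using apply_tensorHom_comp hφ (𝟙 _) g

theorem apply_whiskerLeft_comp (hφ : IsNatural φ) {a : A} {c c' c'' : C}
    (f : a ⟶ H c c') :
    φ _ c c'' ((H c' c'' ◁ f) ≫ comp φ c c' c'') =
      (δ ι _ _ ▷ c) ≫ (α_ _ _ c).hom ≫ (_ ◁ φ a c c' f) ≫ ev φ c' c'' := by
  simpa [ev] using apply_tensorHom_comp hφ f (𝟙 _)

theorem id_comp (hφ : IsNatural φ) (c c' : C) :
    (λ_ (H c c')).inv ≫ (RepresentableHom.id φ c' ▷ H c c') ≫ comp φ c c' c' =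
      𝟙 (H c c') := by
  apply (φ _ c c').injective
  rw [hφ, apply_whiskerRight_comp hφ, apply_id, whisker_exchange_assoc]
  calc _ = ((ι.map (λ_ _).inv ≫ δ ι _ _ ≫ η ι ▷ _ ≫ (λ_ _).hom) ▷ c) ≫ ev φ c c' := by
          monoidal
    _ = ev φ c c' := by
          rw [← Functor.OplaxMonoidal.left_unitality_assoc, Iso.inv_hom_id, id_whiskerRight,
            Category.id_comp]

theorem comp_id (hφ : IsNatural φ) (c c' : C) :
    (ρ_ (H c c')).inv ≫ (H c c' ◁ RepresentableHom.id φ c) ≫ comp φ c c c' =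
      𝟙 (H c c') := by
  apply (φ _ c c').injective
  rw [hφ, apply_whiskerLeft_comp hφ, apply_id]
  calc _ = ((ι.map (ρ_ _).inv ≫ δ ι _ _ ≫ _ ◁ η ι ≫ (ρ_ _).hom) ▷ c) ≫ ev φ c c' := by
          monoidal
    _ = ev φ c c' := by
          rw [← Functor.OplaxMonoidal.right_unitality_assoc, Iso.inv_hom_id, id_whiskerRight,
            Category.id_comp]

theorem assoc (hφ : IsNatural φ) (c c' c'' c''' : C) :
    (α_ (H c'' c''') (H c' c'') (H c c')).inv ≫
        (comp φ c' c'' c''' ▷ H c c') ≫ comp φ c c' c''' =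
      (H c'' c''' ◁ comp φ c c' c'') ≫ comp φ c c'' c''' := by
  apply (φ _ c c''').injective
  rw [hφ, apply_whiskerRight_comp hφ, apply_whiskerLeft_comp hφ, apply_comp, apply_comp,
    whisker_exchange_assoc]
  calc _ = ((ι.map (α_ _ _ _).inv ≫ δ ι _ _ ≫ δ ι _ _ ▷ _) ▷ c) ≫ (α_ _ _ _).hom ≫
        (α_ _ _ _).hom ≫ _ ◁ _ ◁ ev φ c c' ≫ _ ◁ ev φ c' c'' ≫ ev φ c'' c''' := by
          monoidal
    _ = ((δ ι _ _ ≫ _ ◁ δ ι _ _ ≫ (α_ _ _ _).inv) ▷ c) ≫ (α_ _ _ _).hom ≫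
        (α_ _ _ _).hom ≫ _ ◁ _ ◁ ev φ c c' ≫ _ ◁ ev φ c' c'' ≫ ev φ c'' c''' := by
          rw [Functor.OplaxMonoidal.associativity_inv]
    _ = _ := by monoidal

end RepresentableHom

open RepresentableHom in
/-- Let `C` be a braided monoidal category containing a symmetric monoidal
category `A` via a braided monoidal functor `ι`, and suppose that for all objects `c, c'` of
`C` the functor `a ↦ Hom_C(ι a ⊗ c, c')` is representable by an object `H c c'` of `A`
(witnessed by the natural family of bijections `φ`).  Then there are composition morphisms
`H c' c'' ⊗ H c c' ⟶ H c c''` and identities `𝟙_A ⟶ H c c`, defined via the representing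
property and evaluation, which make the objects of `C` into a category enriched over `A`. -/
theorem enriched_over_symmetric_subcategory
    {A C : Type*} [Category A] [Category C]
    [MonoidalCategory A] [MonoidalCategory C]
    [SymmetricCategory A] [BraidedCategory C]
    (ι : A ⥤ C) [ι.Braided]
    (H : C → C → A)
    (φ : ∀ (a : A) (c c' : C), (a ⟶ H c c') ≃ (ι.obj a ⊗ c ⟶ c'))
    (φnat : ∀ {a a' : A} (h : a' ⟶ a) {c c' : C} (f : a ⟶ H c c'),
      φ a' c c' (h ≫ f) = (ι.map h ▷ c) ≫ φ a c c' f) :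
    ∃ (comp : ∀ c c' c'' : C, ((H c' c'' ⊗ H c c' : A) ⟶ H c c''))
      (eid : ∀ c : C, (𝟙_ A ⟶ H c c)),
      -- the composition is defined via the representing property and evaluation:
      (∀ (a a' : A) (c c' c'' : C) (f : a ⟶ H c c') (g : a' ⟶ H c' c''),
        φ (a' ⊗ a) c c'' ((g ⊗ₘ f) ≫ comp c c' c'') =
          (δ ι a' a ▷ c) ≫ (α_ (ι.obj a') (ι.obj a) c).hom ≫
            (ι.obj a' ◁ φ a c c' f) ≫ φ a' c' c'' g) ∧
      -- the identity is the mate of the unitor: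
      (∀ c : C, φ (𝟙_ A) c c (eid c) = (η ι ▷ c) ≫ (λ_ c).hom) ∧
      -- left and right unit laws of the `A`-enriched category:
      (∀ c c' : C,
        (λ_ (H c c')).inv ≫ (eid c' ▷ H c c') ≫ comp c c' c' = 𝟙 (H c c')) ∧
      (∀ c c' : C,
        (ρ_ (H c c')).inv ≫ (H c c' ◁ eid c) ≫ comp c c c' = 𝟙 (H c c')) ∧
      -- associativity of the `A`-enriched composition:
      (∀ c c' c'' c''' : C,
        (α_ (H c'' c''') (H c' c'') (H c c')).inv ≫
            (comp c' c'' c''' ▷ H c c') ≫ comp c c' c''' =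
          (H c'' c''' ◁ comp c c' c'') ≫ comp c c'' c''') :=
  ⟨comp φ, RepresentableHom.id φ, fun _ _ _ _ _ => apply_tensorHom_comp φnat, apply_id φ,
    id_comp φnat, comp_id φnat, assoc φnat⟩
end

section
/- Let C be a braided monoidal category containing a symmetric monoidal subcategory A, with A-enriched category C-underline defined by Hom_A(a, C-underline(c,c')) ≅ Hom_C(a⊗c, c'). Define a tensor product on C-underline by, for mates f̄₁ : a₁⊗c₁ → c₁' and f̄₂ : a₂⊗c₂ → c₂', setting f₁ ⊗ f₂ to be the mate of (f̄₁ ⊗ f̄₂) ∘ (id_{a₁} ⊗ β_{a₂,c₁} ⊗ id_{c₂}). Then this assignment satisfies the interchange law: (f₁' ⊗ f₂') ∘ (f₁ ⊗ f₂) = (f₁' ∘ f₁) ⊗ (f₂' ∘ f₂), where composition of f : c →_a c' and f' : c' →_{a'} c'' has mate f̄' ∘ (id_{a'} ⊗ f̄). -/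
/-!
Writing the mate of `f₁ ⊗ f₂` as `tensorμ ≫ (f̄₁ ⊗ f̄₂)`, naturality of `tensorμ` moves the
inner pair `(f̄₁, f̄₂)` past the outer `tensorμ`, and what is left is the associativity coherence
of `tensorμ` (`tensor_associativity`).
-/

open CategoryTheory MonoidalCategory

section

variable {C : Type*} [Category C] [MonoidalCategory C] [BraidedCategory C]

/-- The mate of the tensor product `f₁ ⊗ f₂` of two degree-graded morphisms, defined as
`(f̄₁ ⊗ f̄₂) ∘ (id_{a₁} ⊗ β_{a₂,c₁} ⊗ id_{c₂})` (with associators inserted). -/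
def mateTensor {a₁ a₂ c₁ c₂ c₁' c₂' : C} (f₁ : a₁ ⊗ c₁ ⟶ c₁') (f₂ : a₂ ⊗ c₂ ⟶ c₂') :
    (a₁ ⊗ a₂) ⊗ (c₁ ⊗ c₂) ⟶ c₁' ⊗ c₂' :=
  (α_ a₁ a₂ (c₁ ⊗ c₂)).hom ≫ (a₁ ◁ (α_ a₂ c₁ c₂).inv) ≫
    (a₁ ◁ ((β_ a₂ c₁).hom ▷ c₂)) ≫ (a₁ ◁ (α_ c₁ a₂ c₂).hom) ≫
      (α_ a₁ c₁ (a₂ ⊗ c₂)).inv ≫ (f₁ ⊗ₘ f₂)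

/-- The mate of the composition of two degree-graded morphisms, `f̄' ∘ (id_{a'} ⊗ f̄)`. -/
def mateComp {a a' c c' c'' : C} (f : a ⊗ c ⟶ c') (f' : a' ⊗ c' ⟶ c'') :
    (a' ⊗ a) ⊗ c ⟶ c'' :=
  (α_ a' a c).hom ≫ (a' ◁ f) ≫ f'

lemma mateTensor_eq_tensorμ_comp {a₁ a₂ c₁ c₂ c₁' c₂' : C} (f₁ : a₁ ⊗ c₁ ⟶ c₁')
    (f₂ : a₂ ⊗ c₂ ⟶ c₂') :
    mateTensor f₁ f₂ = tensorμ a₁ a₂ c₁ c₂ ≫ (f₁ ⊗ₘ f₂) := by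
  simp [mateTensor, tensorμ]

theorem mate_tensor_interchange_general
    {a₁ a₂ a₁' a₂' c₁ c₂ c₁' c₂' c₁'' c₂'' : C}
    (f₁ : a₁ ⊗ c₁ ⟶ c₁') (f₂ : a₂ ⊗ c₂ ⟶ c₂')
    (f₁' : a₁' ⊗ c₁' ⟶ c₁'') (f₂' : a₂' ⊗ c₂' ⟶ c₂'') :
    mateComp (mateTensor f₁ f₂) (mateTensor f₁' f₂') =
      (tensorμ a₁' a₂' a₁ a₂ ▷ (c₁ ⊗ c₂)) ≫
        mateTensor (mateComp f₁ f₁') (mateComp f₂ f₂') := by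
  simp only [mateComp, mateTensor_eq_tensorμ_comp]
  calc _ = (α_ (a₁' ⊗ a₂') (a₁ ⊗ a₂) (c₁ ⊗ c₂)).hom ≫ ((a₁' ⊗ a₂') ◁ tensorμ a₁ a₂ c₁ c₂) ≫
          tensorμ a₁' a₂' (a₁ ⊗ c₁) (a₂ ⊗ c₂) ≫ ((a₁' ◁ f₁ ≫ f₁') ⊗ₘ (a₂' ◁ f₂ ≫ f₂')) := by
        simp only [whiskerLeft_comp, Category.assoc, tensorμ_natural_right_assoc,
          tensorHom_comp_tensorHom]
    _ = (tensorμ a₁' a₂' a₁ a₂ ▷ (c₁ ⊗ c₂)) ≫ tensorμ (a₁' ⊗ a₁) (a₂' ⊗ a₂) c₁ c₂ ≫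
          (((α_ a₁' a₁ c₁).hom ⊗ₘ (α_ a₂' a₂ c₂).hom) ≫
            ((a₁' ◁ f₁ ≫ f₁') ⊗ₘ (a₂' ◁ f₂ ≫ f₂'))) := by
        rw [tensor_associativity_assoc]
    _ = _ := by rw [tensorHom_comp_tensorHom]

/-- In a braided monoidal category `C` containing a symmetric subcategory `A`
(a class of objects closed under tensor and containing the unit, with trivial double braiding
among themselves), the tensor product of degree-graded morphisms defined on mates by
`(f̄₁ ⊗ f̄₂) ∘ (id ⊗ β_{a₂,c₁} ⊗ id)` satisfies the interchange law with respect to the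
composition `f̄' ∘ (id_{a'} ⊗ f̄)`: composing in the `A`-product and then tensoring agrees with
tensoring and then composing, where the degrees are rearranged by the symmetry of `A`
(the middle-four interchange `tensorμ`). -/
theorem mate_tensor_interchange
    (A : Set C) (hunit : 𝟙_ C ∈ A) (htens : ∀ a a' : C, a ∈ A → a' ∈ A → a ⊗ a' ∈ A)
    (hsym : ∀ a ∈ A, ∀ a' ∈ A, (β_ a a').hom ≫ (β_ a' a).hom = 𝟙 (a ⊗ a'))
    {a₁ a₂ a₁' a₂' c₁ c₂ c₁' c₂' c₁'' c₂'' : C}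
    (ha₁ : a₁ ∈ A) (ha₂ : a₂ ∈ A) (ha₁' : a₁' ∈ A) (ha₂' : a₂' ∈ A)
    (f₁ : a₁ ⊗ c₁ ⟶ c₁') (f₂ : a₂ ⊗ c₂ ⟶ c₂')
    (f₁' : a₁' ⊗ c₁' ⟶ c₁'') (f₂' : a₂' ⊗ c₂' ⟶ c₂'') :
    mateComp (mateTensor f₁ f₂) (mateTensor f₁' f₂') =
      (tensorμ a₁' a₂' a₁ a₂ ▷ (c₁ ⊗ c₂)) ≫
        mateTensor (mateComp f₁ f₁') (mateComp f₂ f₂') :=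
  mate_tensor_interchange_general f₁ f₂ f₁' f₂'

end
end

section
/- Let C be a braided monoidal category containing a symmetric subcategory A. For objects c, c' with enriched hom-object H = Hom_underline(c,c') in A (representing a ↦ Hom_C(a⊗c,c')), the assignment b_a : a ⊗ H → H ⊗ a given by the composite of the isomorphism a ⊗ H ≅ Hom_underline(c, a⊗c'), the map induced by postcomposition with the inverse double braiding β⁻¹_{a,c'} ∘ β⁻¹_{c',a} : a⊗c' → a⊗c', the inverse isomorphism, and the symmetry s_{a,H} of A, defines a half-braiding on H, i.e., it is natural in a and satisfies the multiplicativity condition b_{a⊗a'} = (b_a ⊗ id_{a'}) ∘ (id_a ⊗ b_{a'}). Hence (H, b) is an object of the Drinfeld centre Z(A). -/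
open CategoryTheory MonoidalCategory Functor.LaxMonoidal Functor.OplaxMonoidal

/-!
Transport everything into `C` along `ι` and let `ev : ι H ⊗ c ⟶ c'` be the evaluation
representing `𝟙 H`. Since morphisms into `H c (ι a' ⊗ c')` are detected by `φ`, a map
`t : a ⊗ H ⟶ H ⊗ a'` equals `(g ▷ H) ≫ b a'` exactly when its image in `C` intertwines `ev`
with the inverse braiding past `c'` (`IntertwinesEv`). This property is stable under whiskering
and, by the hexagon identities, under the tensor-product formula for half-braidings, so naturality
and multiplicativity follow from uniqueness. Each `D a` is postcomposition with an isomorphism,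
hence invertible.
-/

namespace CategoryTheory

open BraidedCategory

section Braided

variable {C : Type*} [Category C] [MonoidalCategory C] [BraidedCategory C] {h c c' : C}

/-- In string diagrams: `b` followed by crossing `y` over `c` and evaluating with `ev` is the same
as evaluating first, then crossing `x` under `c'`, then `k`. -/
def IntertwinesEv (ev : h ⊗ c ⟶ c') {x y : C} (k : x ⟶ y) (b : x ⊗ h ⟶ h ⊗ y) : Prop :=
  b ▷ c ≫ (α_ h y c).hom ≫ h ◁ (β_ y c).hom ≫ (α_ h c y).inv ≫ ev ▷ y =
    (α_ x h c).hom ≫ x ◁ ev ≫ (β_ c' x).inv ≫ c' ◁ k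

variable {ev : h ⊗ c ⟶ c'}

theorem intertwinesEv_iff {x y : C} (k : x ⟶ y) (b : x ⊗ h ⟶ h ⊗ y) :
    IntertwinesEv ev k b ↔ (b ≫ (β_ y h).inv) ▷ c ≫ (α_ y h c).hom ≫ y ◁ ev =
      (α_ x h c).hom ≫ x ◁ ev ≫ k ▷ c' ≫ (β_ c' y).inv ≫ (β_ y c').inv := by
  unfold IntertwinesEv
  rw [← cancel_mono (β_ y c').inv]
  simp only [Category.assoc, braiding_inv_naturality_left, braiding_tensor_right_inv]
  simp

theorem IntertwinesEv.comp_whiskerLeft {x y z : C} {k : x ⟶ y} {b : x ⊗ h ⟶ h ⊗ y}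
    (hb : IntertwinesEv ev k b) (l : y ⟶ z) : IntertwinesEv ev (k ≫ l) (b ≫ h ◁ l) := by
  unfold IntertwinesEv at *
  calc _ = (b ▷ c ≫ (α_ h y c).hom ≫ h ◁ (β_ y c).hom ≫ (α_ h c y).inv ≫ ev ▷ y) ≫ c' ◁ l := by
        rw [comp_whiskerRight, Category.assoc, associator_naturality_middle_assoc,
          ← whiskerLeft_comp_assoc, braiding_naturality_left, whiskerLeft_comp_assoc,
          associator_inv_naturality_right_assoc, whisker_exchange]
        simp only [Category.assoc]
    _ = _ := by rw [hb]; simp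

theorem IntertwinesEv.whiskerRight_comp {w x y : C} {k : x ⟶ y} {b : x ⊗ h ⟶ h ⊗ y}
    (hb : IntertwinesEv ev k b) (l : w ⟶ x) : IntertwinesEv ev (l ≫ k) (l ▷ h ≫ b) := by
  unfold IntertwinesEv at *
  rw [comp_whiskerRight, Category.assoc, hb, associator_naturality_left_assoc,
    ← whisker_exchange_assoc, braiding_inv_naturality_left_assoc, whiskerLeft_comp]

theorem IntertwinesEv.tensor {x y : C} {b : x ⊗ h ⟶ h ⊗ x} {b' : y ⊗ h ⟶ h ⊗ y}
    (hb : IntertwinesEv ev (𝟙 x) b) (hb' : IntertwinesEv ev (𝟙 y) b') :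
    IntertwinesEv ev (𝟙 (x ⊗ y))
      ((α_ x y h).hom ≫ x ◁ b' ≫ (α_ x h y).inv ≫ b ▷ y ≫ (α_ h x y).hom) := by
  unfold IntertwinesEv at *
  rw [whiskerLeft_id, Category.comp_id] at hb hb' ⊢
  calc _ = 𝟙 _ ⊗≫ x ◁ (b' ▷ c) ⊗≫ (b ▷ (y ⊗ c) ≫ (h ⊗ x) ◁ (β_ y c).hom) ⊗≫
        (h ◁ (β_ x c).hom) ▷ y ⊗≫ (ev ▷ x) ▷ y ⊗≫ 𝟙 _ := by
        rw [braiding_tensor_left_hom]; monoidal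
    _ = 𝟙 _ ⊗≫ x ◁ (b' ▷ c ≫ (α_ h y c).hom ≫ h ◁ (β_ y c).hom ≫ (α_ h c y).inv) ⊗≫
        (b ▷ c ≫ (α_ h x c).hom ≫ h ◁ (β_ x c).hom ≫ (α_ h c x).inv ≫ ev ▷ x) ▷ y ⊗≫ 𝟙 _ := by
        rw [← whisker_exchange]; monoidal
    _ = 𝟙 _ ⊗≫ x ◁ (b' ▷ c ≫ (α_ h y c).hom ≫ h ◁ (β_ y c).hom ≫ (α_ h c y).inv ≫ ev ▷ y) ⊗≫
        (β_ c' x).inv ▷ y ⊗≫ 𝟙 _ := by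
        rw [hb]; monoidal
    _ = _ := by
        rw [hb', braiding_tensor_right_inv]; monoidal

end Braided

theorem Functor.Monoidal.μ_map_tensorHalfBraiding_δ {A C : Type*} [Category A] [Category C]
    [MonoidalCategory A] [MonoidalCategory C] (F : A ⥤ C) [F.Monoidal] {a a' h : A}
    (t : a ⊗ h ⟶ h ⊗ a) (t' : a' ⊗ h ⟶ h ⊗ a') :
    μ F (a ⊗ a') h ≫
        F.map ((α_ a a' h).hom ≫ a ◁ t' ≫ (α_ a h a').inv ≫ t ▷ a' ≫ (α_ h a a').hom) ≫
        δ F h (a ⊗ a') =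
      (δ F a a' ▷ F.obj h ≫
        (α_ _ _ _).hom ≫ F.obj a ◁ (μ F a' h ≫ F.map t' ≫ δ F h a') ≫ (α_ _ _ _).inv ≫
          (μ F a h ≫ F.map t ≫ δ F h a) ▷ F.obj a' ≫ (α_ _ _ _).hom) ≫
        F.obj h ◁ μ F a a' := by
  simp only [Functor.map_comp, map_associator, map_associator_inv, map_whiskerLeft,
    map_whiskerRight, Category.assoc, μ_δ_assoc, μ_δ, Category.comp_id,
    MonoidalCategory.whiskerLeft_comp, comp_whiskerRight]

theorem isIso_of_forall_equiv_comp_eq {A B : Type*} [Category A] [Category B] {Y : A} {G : A → B}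
    {d : B} (F : ∀ x : A, (x ⟶ Y) ≃ (G x ⟶ d)) {D : Y ⟶ Y} {u : d ⟶ d} [IsIso u]
    (hD : ∀ (x : A) (f : x ⟶ Y), F x (f ≫ D) = F x f ≫ u) : IsIso D := by
  rw [isIso_iff_yoneda_map_bijective]
  intro x
  have : (fun f : x ⟶ Y => f ≫ D) = (F x).symm ∘ (fun g => g ≫ u) ∘ F x := by
    funext f; simp [← hD]
  rw [this]
  exact (F x).symm.bijective.comp (((asIso u).homToEquiv ..).bijective.comp (F x).bijective)

section EnrichedHom

variable {A C : Type*} [Category A] [Category C] [MonoidalCategory A] [MonoidalCategory C]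
  [BraidedCategory A] [BraidedCategory C] {ι : A ⥤ C} [ι.Braided] {H : C → C → A}
  {φ : ∀ (a : A) (c c' : C), (a ⟶ H c c') ≃ (ι.obj a ⊗ c ⟶ c')} {c c' : C}
  {ψ : ∀ a : A, ((a ⊗ H c c' : A) ≅ H c (ι.obj a ⊗ c'))}
  {D : ∀ a : A, (H c (ι.obj a ⊗ c') ⟶ H c (ι.obj a ⊗ c'))}
  {b : ∀ a : A, ((a ⊗ H c c' : A) ⟶ H c c' ⊗ a)}

theorem intertwinesEv_iff_eq_whiskerRight_comp
    (φnat : ∀ {a a' : A} (h : a' ⟶ a) {c c' : C} (f : a ⟶ H c c'),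
      φ a' c c' (h ≫ f) = (ι.map h ▷ c) ≫ φ a c c' f)
    (hψ : ∀ a : A, φ (a ⊗ H c c') c (ι.obj a ⊗ c') (ψ a).hom =
      (δ ι a (H c c') ▷ c) ≫ (α_ (ι.obj a) (ι.obj (H c c')) c).hom ≫
        (ι.obj a ◁ φ (H c c') c c' (𝟙 (H c c'))))
    (hD : ∀ (a x : A) (f : x ⟶ H c (ι.obj a ⊗ c')),
      φ x c (ι.obj a ⊗ c') (f ≫ D a) =
        φ x c (ι.obj a ⊗ c') f ≫ (β_ c' (ι.obj a)).inv ≫ (β_ (ι.obj a) c').inv)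
    (hb : ∀ a : A, b a = (ψ a).hom ≫ D a ≫ (ψ a).inv ≫ (β_ a (H c c')).hom)
    {a a' : A} (g : a ⟶ a') (t : a ⊗ H c c' ⟶ H c c' ⊗ a') :
    IntertwinesEv (φ (H c c') c c' (𝟙 _)) (ι.map g) (μ ι a (H c c') ≫ ι.map t ≫ δ ι (H c c') a')
      ↔ t = g ▷ H c c' ≫ b a' := by
  have hφψ : ∀ v : a ⊗ H c c' ⟶ a' ⊗ H c c', φ _ c _ (v ≫ (ψ a').hom) =
      ι.map v ▷ c ≫ δ ι a' (H c c') ▷ c ≫ (α_ _ _ c).hom ≫ ι.obj a' ◁ φ (H c c') c c' (𝟙 _) := by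
    intro v; rw [φnat, hψ]
  have hβinv : ι.map (β_ a' (H c c')).inv =
      δ ι (H c c') a' ≫ (β_ (ι.obj a') (ι.obj (H c c'))).inv ≫ μ ι a' (H c c') := by
    rw [← cancel_epi (ι.map (β_ a' (H c c')).hom), ← ι.map_comp, Iso.hom_inv_id, ι.map_id,
      Functor.map_braiding]
    simp
  have hL : ι.map (t ≫ (β_ a' (H c c')).inv) ▷ c ≫ δ ι a' (H c c') ▷ c =
      δ ι a (H c c') ▷ c ≫ (μ ι a (H c c') ≫ ι.map t ≫ δ ι (H c c') a' ≫
        (β_ (ι.obj a') (ι.obj (H c c'))).inv) ▷ c := by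
    rw [Functor.map_comp, hβinv]
    simp only [comp_whiskerRight, Category.assoc, Functor.Monoidal.whiskerRight_μ_δ,
      Functor.Monoidal.whiskerRight_δ_μ_assoc, Category.comp_id]
  have hR : ι.map (g ▷ H c c') ▷ c ≫ δ ι a' (H c c') ▷ c ≫ (α_ _ _ c).hom ≫
      ι.obj a' ◁ φ (H c c') c c' (𝟙 _) =
      δ ι a (H c c') ▷ c ≫ (α_ _ _ c).hom ≫ ι.obj a ◁ φ (H c c') c c' (𝟙 _) ≫ ι.map g ▷ c' := by
    rw [← comp_whiskerRight_assoc, ← δ_natural_left, comp_whiskerRight_assoc,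
      associator_naturality_left_assoc, whisker_exchange]
  calc IntertwinesEv _ _ _
      ↔ δ ι a (H c c') ▷ c ≫ (μ ι a (H c c') ≫ ι.map t ≫ δ ι (H c c') a' ≫
          (β_ (ι.obj a') (ι.obj (H c c'))).inv) ▷ c ≫ (α_ _ _ c).hom ≫
          ι.obj a' ◁ φ (H c c') c c' (𝟙 _) =
        δ ι a (H c c') ▷ c ≫ (α_ _ _ c).hom ≫ ι.obj a ◁ φ (H c c') c c' (𝟙 _) ≫
          ι.map g ▷ c' ≫ (β_ c' (ι.obj a')).inv ≫ (β_ (ι.obj a') c').inv := by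
        rw [intertwinesEv_iff, cancel_epi]
        simp only [Category.assoc]
    _ ↔ φ _ c _ ((t ≫ (β_ a' (H c c')).inv) ≫ (ψ a').hom) =
        φ _ c _ ((g ▷ H c c' ≫ (ψ a').hom) ≫ D a') := by
        rw [hD, hφψ, ← Category.assoc, hφψ, reassoc_of% hL, hR]
        simp only [Category.assoc]
    _ ↔ t = g ▷ H c c' ≫ b a' := by
        rw [(φ _ c _).injective.eq_iff, ← Iso.eq_comp_inv, Iso.comp_inv_eq, hb]
        simp only [Category.assoc]

end EnrichedHom

end CategoryTheory

/-- Let `C` be a braided monoidal category containing a symmetric monoidal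
category `A` via a braided monoidal functor `ι`, with enriched hom-objects `H c c'` in `A`
representing `a ↦ Hom_C(ι a ⊗ c, c')`.  For fixed `c, c'`, let `ψ a : a ⊗ H c c' ≅ H c (ι a ⊗ c')`
be the canonical isomorphism, `D a` the endomorphism of `H c (ι a ⊗ c')` induced by
postcomposition with the inverse double braiding `β⁻¹_{a,c'} ∘ β⁻¹_{c',a}`, and let
`b a : a ⊗ H c c' ⟶ H c c' ⊗ a` be `ψ_a ≫ D a ≫ ψ_a⁻¹` followed by the symmetry of `A`.
Then `b` is a half-braiding on `H c c'`: it is natural in `a`, satisfies the multiplicativity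
condition `b_{a⊗a'} = (b_a ⊗ id) ∘ (id ⊗ b_{a'})`, and each component is an isomorphism.
Hence `(H c c', b)` is an object of the Drinfeld centre `Z(A)`. -/
theorem half_braiding_on_enriched_hom
    {A C : Type*} [Category A] [Category C]
    [MonoidalCategory A] [MonoidalCategory C]
    [SymmetricCategory A] [BraidedCategory C]
    (ι : A ⥤ C) [ι.Braided]
    (H : C → C → A)
    (φ : ∀ (a : A) (c c' : C), (a ⟶ H c c') ≃ (ι.obj a ⊗ c ⟶ c'))
    (φnat : ∀ {a a' : A} (h : a' ⟶ a) {c c' : C} (f : a ⟶ H c c'),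
      φ a' c c' (h ≫ f) = (ι.map h ▷ c) ≫ φ a c c' f)
    (c c' : C)
    (ψ : ∀ a : A, ((a ⊗ H c c' : A) ≅ H c (ι.obj a ⊗ c')))
    (hψ : ∀ a : A, φ (a ⊗ H c c') c (ι.obj a ⊗ c') (ψ a).hom =
      (δ ι a (H c c') ▷ c) ≫ (α_ (ι.obj a) (ι.obj (H c c')) c).hom ≫
        (ι.obj a ◁ φ (H c c') c c' (𝟙 (H c c'))))
    (D : ∀ a : A, (H c (ι.obj a ⊗ c') ⟶ H c (ι.obj a ⊗ c')))
    (hD : ∀ (a x : A) (f : x ⟶ H c (ι.obj a ⊗ c')),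
      φ x c (ι.obj a ⊗ c') (f ≫ D a) =
        φ x c (ι.obj a ⊗ c') f ≫ (β_ c' (ι.obj a)).inv ≫ (β_ (ι.obj a) c').inv)
    (b : ∀ a : A, ((a ⊗ H c c' : A) ⟶ H c c' ⊗ a))
    (hb : ∀ a : A, b a = (ψ a).hom ≫ D a ≫ (ψ a).inv ≫ (β_ a (H c c')).hom) :
    -- naturality of the half-braiding
    (∀ (a a' : A) (g : a ⟶ a'), (g ▷ H c c') ≫ b a' = b a ≫ (H c c' ◁ g)) ∧
    -- multiplicativity of the half-braiding
    (∀ a a' : A, b (a ⊗ a') =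
      (α_ a a' (H c c')).hom ≫ (a ◁ b a') ≫ (α_ a (H c c') a').inv ≫
        (b a ▷ a') ≫ (α_ (H c c') a a').hom) ∧
    -- each component is invertible
    (∀ a : A, IsIso (b a)) := by
  have char {a a' : A} :=
    intertwinesEv_iff_eq_whiskerRight_comp (a := a) (a' := a') @φnat hψ hD hb
  have hb_ev : ∀ a, IntertwinesEv (φ (H c c') c c' (𝟙 _)) (𝟙 (ι.obj a))
      (μ ι a (H c c') ≫ ι.map (b a) ≫ δ ι (H c c') a) := fun a => by
    simpa using (char (𝟙 a) (b a)).2 (by simp)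
  refine ⟨fun a a' g => ?_, fun a a' => ?_, fun a => ?_⟩
  · have h := (hb_ev a).comp_whiskerLeft (ι.map g)
    rw [Category.id_comp, Category.assoc, Category.assoc, δ_natural_right,
      ← Functor.map_comp_assoc, char] at h
    exact h.symm
  · have h := (((hb_ev a).tensor (hb_ev a')).whiskerRight_comp (δ ι a a')).comp_whiskerLeft
      (μ ι a a')
    rw [Category.comp_id, Functor.Monoidal.δ_μ, ← ι.map_id,
      ← Functor.Monoidal.μ_map_tensorHalfBraiding_δ, char, id_whiskerRight,
      Category.id_comp] at h
    exact h.symm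
  · have := isIso_of_forall_equiv_comp_eq (fun x => φ x c (ι.obj a ⊗ c')) (hD a)
    rw [hb]
    infer_instance
end

section
/- Let A be a symmetric fusion category and C a braided monoidal category containing A, with enriched hom-objects Hom_underline(c,c') in Z(A). If C equals its own commutant of A, i.e., the double braiding β_{c,a} ∘ β_{a,c} = id for all a ∈ A and c ∈ C, then for every pair of objects c, c' the half-braiding on Hom_underline(c,c') constructed from the inverse double braiding equals the symmetry of A; in particular the enriched hom-objects lie in the image of the canonical embedding A → Z(A). -/
open CategoryTheory MonoidalCategory Functor.LaxMonoidal Functor.OplaxMonoidal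

/-- Let `A` be a symmetric monoidal category contained, via a braided
monoidal functor `ι`, in a braided monoidal category `C`, with enriched hom-objects `H c c'`
carrying the half-braiding `b` constructed from the inverse double braiding.  If `C` equals
its own commutant of `A`, i.e. the double braiding `β_{c,a} ∘ β_{a,c}` is the identity for
all `a ∈ A` and `c ∈ C`, then every half-braiding `b` equals the symmetry of `A`; in
particular the enriched hom-objects lie in the image of the canonical embedding `A → Z(A)`. -/
theorem half_braiding_is_symmetry_of_commutant
    {A C : Type*} [Category A] [Category C]
    [MonoidalCategory A] [MonoidalCategory C]
    [SymmetricCategory A] [BraidedCategory C]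
    (ι : A ⥤ C) [ι.Braided]
    (H : C → C → A)
    (φ : ∀ (a : A) (c c' : C), (a ⟶ H c c') ≃ (ι.obj a ⊗ c ⟶ c'))
    (φnat : ∀ {a a' : A} (h : a' ⟶ a) {c c' : C} (f : a ⟶ H c c'),
      φ a' c c' (h ≫ f) = (ι.map h ▷ c) ≫ φ a c c' f)
    (ψ : ∀ (c c' : C) (a : A), ((a ⊗ H c c' : A) ≅ H c (ι.obj a ⊗ c')))
    (hψ : ∀ (c c' : C) (a : A), φ (a ⊗ H c c') c (ι.obj a ⊗ c') (ψ c c' a).hom =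
      (δ ι a (H c c') ▷ c) ≫ (α_ (ι.obj a) (ι.obj (H c c')) c).hom ≫
        (ι.obj a ◁ φ (H c c') c c' (𝟙 (H c c'))))
    (D : ∀ (c c' : C) (a : A), (H c (ι.obj a ⊗ c') ⟶ H c (ι.obj a ⊗ c')))
    (hD : ∀ (c c' : C) (a x : A) (f : x ⟶ H c (ι.obj a ⊗ c')),
      φ x c (ι.obj a ⊗ c') (f ≫ D c c' a) =
        φ x c (ι.obj a ⊗ c') f ≫ (β_ c' (ι.obj a)).inv ≫ (β_ (ι.obj a) c').inv)
    (b : ∀ (c c' : C) (a : A), ((a ⊗ H c c' : A) ⟶ H c c' ⊗ a))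
    (hb : ∀ (c c' : C) (a : A),
      b c c' a = (ψ c c' a).hom ≫ D c c' a ≫ (ψ c c' a).inv ≫ (β_ a (H c c')).hom)
    -- `A` is transparent in `C`:
    (htrans : ∀ (a : A) (x : C),
      (β_ (ι.obj a) x).hom ≫ (β_ x (ι.obj a)).hom = 𝟙 (ι.obj a ⊗ x)) :
    ∀ (c c' : C) (a : A), b c c' a = (β_ a (H c c')).hom := by
  intro c c' a
  have hid : (β_ c' (ι.obj a)).inv ≫ (β_ (ι.obj a) c').inv = 𝟙 _ := by
    have h : ((β_ (ι.obj a) c').hom ≫ (β_ c' (ι.obj a)).hom) ≫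
        ((β_ c' (ι.obj a)).inv ≫ (β_ (ι.obj a) c').inv) = 𝟙 _ := by simp
    rw [htrans a c', Category.id_comp] at h
    exact h
  have hDid : D c c' a = 𝟙 _ := by
    have h := hD c c' a (H c (ι.obj a ⊗ c')) (𝟙 _)
    rw [Category.id_comp, hid, Category.comp_id] at h
    exact (φ _ _ _).injective h
  rw [hb, hDid]
  simp
end

section
/- Conversely, let C be a braided monoidal category containing a symmetric fusion category A, and let c be an object such that for every object c' the half-braiding on Hom_underline(c',c) (constructed from the inverse double braiding with c) equals the symmetry of A. Then c lies in the braided commutant Z₂(A, C): β_{c,a} ∘ β_{a,c} = id_{a⊗c} for all a ∈ A. -/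
open CategoryTheory MonoidalCategory Functor.LaxMonoidal Functor.OplaxMonoidal

/-- Conversely, let `C` be a braided monoidal category containing a
symmetric monoidal category `A` via a braided monoidal functor `ι`, and let `c` be an object
such that for every object `c'` the half-braiding on the enriched hom-object `H c' c`
(constructed from the inverse double braiding with `c`) equals the symmetry of `A`.  Then `c`
lies in the braided commutant `Z₂(A, C)`: the double braiding `β_{c,a} ∘ β_{a,c}` is the
identity of `ι a ⊗ c` for all `a ∈ A`. -/
theorem symmetry_half_braiding_implies_commutant
    {A C : Type*} [Category A] [Category C]
    [MonoidalCategory A] [MonoidalCategory C]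
    [SymmetricCategory A] [BraidedCategory C]
    (ι : A ⥤ C) [ι.Braided]
    (H : C → C → A)
    (φ : ∀ (a : A) (c c' : C), (a ⟶ H c c') ≃ (ι.obj a ⊗ c ⟶ c'))
    (φnat : ∀ {a a' : A} (h : a' ⟶ a) {c c' : C} (f : a ⟶ H c c'),
      φ a' c c' (h ≫ f) = (ι.map h ▷ c) ≫ φ a c c' f)
    (c : C)
    (ψ : ∀ (c' : C) (a : A), ((a ⊗ H c' c : A) ≅ H c' (ι.obj a ⊗ c)))
    (hψ : ∀ (c' : C) (a : A), φ (a ⊗ H c' c) c' (ι.obj a ⊗ c) (ψ c' a).hom =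
      (δ ι a (H c' c) ▷ c') ≫ (α_ (ι.obj a) (ι.obj (H c' c)) c').hom ≫
        (ι.obj a ◁ φ (H c' c) c' c (𝟙 (H c' c))))
    (D : ∀ (c' : C) (a : A), (H c' (ι.obj a ⊗ c) ⟶ H c' (ι.obj a ⊗ c)))
    (hD : ∀ (c' : C) (a x : A) (f : x ⟶ H c' (ι.obj a ⊗ c)),
      φ x c' (ι.obj a ⊗ c) (f ≫ D c' a) =
        φ x c' (ι.obj a ⊗ c) f ≫ (β_ c (ι.obj a)).inv ≫ (β_ (ι.obj a) c).inv)
    (b : ∀ (c' : C) (a : A), ((a ⊗ H c' c : A) ⟶ H c' c ⊗ a))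
    (hb : ∀ (c' : C) (a : A),
      b c' a = (ψ c' a).hom ≫ D c' a ≫ (ψ c' a).inv ≫ (β_ a (H c' c)).hom)
    -- the half-braiding on every `H c' c` is the symmetry of `A`:
    (hbsym : ∀ (c' : C) (a : A), b c' a = (β_ a (H c' c)).hom) :
    ∀ a : A, (β_ (ι.obj a) c).hom ≫ (β_ c (ι.obj a)).hom = 𝟙 (ι.obj a ⊗ c) := by
  intro a
  -- Step 1: the symmetry hypothesis forces `D c a = 𝟙`.
  have hD1 : D c a = 𝟙 _ := by
    have h : (ψ c a).hom ≫ D c a ≫ (ψ c a).inv ≫ (β_ a (H c c)).hom =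
        (β_ a (H c c)).hom := by rw [← hb, hbsym]
    have h2 : (ψ c a).hom ≫ D c a ≫ (ψ c a).inv = 𝟙 _ := by
      have := congrArg (fun g => g ≫ (β_ a (H c c)).inv) h
      simpa using this
    calc D c a = (ψ c a).inv ≫ ((ψ c a).hom ≫ D c a ≫ (ψ c a).inv) ≫ (ψ c a).hom := by
          simp
      _ = 𝟙 _ := by rw [h2]; simp
  -- Step 2: pull back the identity of `ι a ⊗ c` through the equivalence `φ`.
  obtain ⟨f, hf⟩ := (φ a c (ι.obj a ⊗ c)).surjective (𝟙 (ι.obj a ⊗ c))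
  have h3 := hD c a a f
  rw [hD1, Category.comp_id, hf, Category.id_comp] at h3
  -- so `𝟙 = β_c.inv ≫ β_a.inv`
  have h4 : (𝟙 (ι.obj a ⊗ c)) = (β_ c (ι.obj a)).inv ≫ (β_ (ι.obj a) c).inv := by
    exact h3
  calc (β_ (ι.obj a) c).hom ≫ (β_ c (ι.obj a)).hom
      = ((β_ (ι.obj a) c).hom ≫ (β_ c (ι.obj a)).hom) ≫ 𝟙 _ := by simp
    _ = ((β_ (ι.obj a) c).hom ≫ (β_ c (ι.obj a)).hom) ≫
        ((β_ c (ι.obj a)).inv ≫ (β_ (ι.obj a) c).inv) := by rw [← h4]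
    _ = 𝟙 _ := by simp
end
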